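/- arXiv:2410.19506 — 7 statements merged into one kernel-verified Lean document; each statement's English description precedes it below -/
import Mathlib

section
/- Let f : E → ℝ be convex, differentiable, with L-Lipschitz gradient. Then ∇f is co-coercive: for all x, y ∈ E, ⟨∇f(x) - ∇f(y), x - y⟩ ≥ (1/L)‖∇f(x) - ∇f(y)‖². -/
open scoped RealInnerProductSpace
open Set AffineMap

/-!
Along the segment from `x` to `y` the derivative of `f` grows at most like `L t ‖y - x‖²`, which
integrates to the quadratic upper bound `f y ≤ f x + ⟪∇f x, y - x⟫ + L/2 ‖y - x‖²`. The function
`f - ⟪∇f x, ·⟫` is minimised at `x`; comparing its tangent lower bound at `x` with its quadratic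
upper bound at `y`, both evaluated at the gradient step `z = y - (∇f y - ∇f x) / L`, sharpens
convexity to `f x + ⟪∇f x, y - x⟫ + ‖∇f y - ∇f x‖² / (2L) ≤ f y`. Adding this to the same
inequality with `x` and `y` exchanged gives co-coercivity.
-/

theorem le_add_deriv_add_of_deriv_sub_le {φ φ' : ℝ → ℝ} {K : ℝ}
    (hφ : ∀ t ∈ Icc (0 : ℝ) 1, HasDerivAt φ (φ' t) t)
    (hK : ∀ t ∈ Ioo (0 : ℝ) 1, φ' t - φ' 0 ≤ K * t) :
    φ 1 ≤ φ 0 + φ' 0 + K / 2 := by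
  set ψ : ℝ → ℝ := fun t ↦ φ t - t * φ' 0 - K / 2 * t ^ 2
  have hψ : ∀ t ∈ Icc (0 : ℝ) 1, HasDerivAt ψ (φ' t - φ' 0 - K * t) t := fun t ht ↦ by
    refine (((hφ t ht).sub ((hasDerivAt_id t).mul_const (φ' 0))).sub
      ((hasDerivAt_pow 2 t).const_mul (K / 2))).congr_deriv ?_
    simp only [one_mul]; ring
  have hanti : AntitoneOn ψ (Icc 0 1) := by
    refine antitoneOn_of_hasDerivWithinAt_nonpos (f' := fun t ↦ φ' t - φ' 0 - K * t)
      (convex_Icc 0 1) (fun t ht ↦ (hψ t ht).continuousAt.continuousWithinAt) (fun t ht ↦ ?_) (fun t ht ↦ ?_)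
      <;> rw [interior_Icc] at ht
    · exact (hψ t (Ioo_subset_Icc_self ht)).hasDerivWithinAt
    · linarith [hK t ht]
  have := hanti (left_mem_Icc.2 zero_le_one) (right_mem_Icc.2 zero_le_one) zero_le_one
  simp only [ψ] at this
  linarith

section InnerProductSpace

variable {E : Type*} [NormedAddCommGroup E] [InnerProductSpace ℝ E] [CompleteSpace E] {f : E → ℝ}

theorem HasGradientAt.hasDerivAt_comp_lineMap {g x y : E} {t : ℝ}
    (hf : HasGradientAt f g (lineMap x y t)) :
    HasDerivAt (fun s ↦ f (lineMap x y s)) ⟪g, y - x⟫ t := by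
  have := hf.hasFDerivAt.comp_hasDerivAt t hasDerivAt_lineMap
  simp only [InnerProductSpace.toDual_apply_apply] at this
  exact this

theorem ConvexOn.add_inner_le_of_hasGradientAt {s : Set E} (hconv : ConvexOn ℝ s f) {g x y : E}
    (hx : x ∈ s) (hy : y ∈ s) (hf : HasGradientAt f g x) :
    f x + ⟪g, y - x⟫ ≤ f y := by
  have hline := hconv.comp_affineMap (lineMap x y)
  have := hline.le_slope_of_hasDerivAt (x := 0) (y := 1) (by simpa using hx) (by simpa using hy)
    zero_lt_one (HasGradientAt.hasDerivAt_comp_lineMap (t := 0) (by simpa using hf))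
  simp only [slope_def_field, Function.comp_apply, lineMap_apply_one, lineMap_apply_zero,
    sub_zero, div_one] at this
  linarith

theorem le_add_inner_add_of_lipschitz_gradient {f' : E → E} {L : ℝ}
    (hf : ∀ x, HasGradientAt f (f' x) x) (hlip : ∀ x y, ‖f' x - f' y‖ ≤ L * ‖x - y‖) (x y : E) :
    f y ≤ f x + ⟪f' x, y - x⟫ + L / 2 * ‖y - x‖ ^ 2 := by
  have key := le_add_deriv_add_of_deriv_sub_le (φ := fun t ↦ f (lineMap x y t))
    (φ' := fun t ↦ ⟪f' (lineMap x y t), y - x⟫) (K := L * ‖y - x‖ ^ 2)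
    (fun t _ ↦ (hf _).hasDerivAt_comp_lineMap) (fun t ht ↦ ?_)
  · simpa [mul_div_right_comm] using key
  · calc ⟪f' (lineMap x y t), y - x⟫ - ⟪f' (lineMap x y (0 : ℝ)), y - x⟫
        = ⟪f' (lineMap x y t) - f' x, y - x⟫ := by simp [inner_sub_left]
      _ ≤ ‖f' (lineMap x y t) - f' x‖ * ‖y - x‖ := real_inner_le_norm _ _
      _ ≤ L * (t * ‖y - x‖) * ‖y - x‖ := by
        gcongr
        simpa [lineMap_apply_module', norm_smul, abs_of_pos ht.1] using hlip (lineMap x y t) x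
      _ = L * ‖y - x‖ ^ 2 * t := by ring

theorem ConvexOn.add_inner_add_sq_norm_le_of_lipschitz_gradient (hconv : ConvexOn ℝ univ f)
    {f' : E → E} {L : ℝ} (hL : 0 < L) (hf : ∀ x, HasGradientAt f (f' x) x)
    (hlip : ∀ x y, ‖f' x - f' y‖ ≤ L * ‖x - y‖) (x y : E) :
    f x + ⟪f' x, y - x⟫ + 1 / (2 * L) * ‖f' y - f' x‖ ^ 2 ≤ f y := by
  set d := f' y - f' x
  set z := y - L⁻¹ • d
  have hbelow := hconv.add_inner_le_of_hasGradientAt (mem_univ x) (mem_univ z) (hf x)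
  have habove := le_add_inner_add_of_lipschitz_gradient hf hlip y z
  have hzx : z - x = (y - x) - L⁻¹ • d := by simp only [z]; abel
  have hzy : z - y = -(L⁻¹ • d) := by simp only [z]; abel
  rw [hzx, inner_sub_right, real_inner_smul_right] at hbelow
  rw [hzy, inner_neg_right, real_inner_smul_right, norm_neg, norm_smul, Real.norm_eq_abs,
    abs_of_pos (inv_pos.2 hL)] at habove
  have hd : L⁻¹ * ⟪f' y, d⟫ - L⁻¹ * ⟪f' x, d⟫ = L⁻¹ * ‖d‖ ^ 2 := by
    rw [← mul_sub, ← inner_sub_left, real_inner_self_eq_norm_sq]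
  have hL' : L / 2 * (L⁻¹ * ‖d‖) ^ 2 = L⁻¹ * ‖d‖ ^ 2 - 1 / (2 * L) * ‖d‖ ^ 2 := by
    field_simp; ring
  linarith

end InnerProductSpace

/-- Co-coercivity of the gradient of a convex `L`-smooth function. -/
theorem stmt_2 {E : Type*} [NormedAddCommGroup E] [InnerProductSpace ℝ E]
    [FiniteDimensional ℝ E]
    (f : E → ℝ) (f' : E → E) (L : ℝ) (hL : 0 < L)
    (hconv : ConvexOn ℝ Set.univ f)
    (hdiff : ∀ x, HasGradientAt f (f' x) x)
    (hlip : ∀ x y, ‖f' x - f' y‖ ≤ L * ‖x - y‖) :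
    ∀ x y : E, ⟪f' x - f' y, x - y⟫ ≥ (1 / L) * ‖f' x - f' y‖ ^ 2 := by
  intro x y
  have hxy := hconv.add_inner_add_sq_norm_le_of_lipschitz_gradient hL hdiff hlip x y
  have hyx := hconv.add_inner_add_sq_norm_le_of_lipschitz_gradient hL hdiff hlip y x
  have hinner : ⟪f' x - f' y, x - y⟫ = -(⟪f' x, y - x⟫ + ⟪f' y, x - y⟫) := by
    rw [← neg_sub x y, inner_neg_right, inner_sub_left]; ring
  have hhalf : 1 / (2 * L) + 1 / (2 * L) = 1 / L := by field_simp; norm_num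
  rw [norm_sub_rev] at hxy
  rw [ge_iff_le, hinner, ← hhalf]
  linarith
end

section
/- Let T : E → E be a 1-Lipschitz operator admitting a fixed point, let x₀ ∈ E and define xₙ₊₁ = T(xₙ). If ‖xₙ₊₁ - xₙ‖ → 0 as n → ∞, then the sequence (xₙ) converges to a fixed point of T. -/
/-!
Distances to a fixed point decrease along the orbit of a nonexpansive map, so the orbit is
bounded and, the space being proper, has a convergent subsequence. Since consecutive iterates
merge, its limit `z` is a fixed point; the distances to `z` then decrease and tend to `0` along
the subsequence, hence along the whole orbit.
-/

open Filter Topology Function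

section NonexpansiveOrbit

variable {X : Type*} [MetricSpace X] {T : X → X} {x : ℕ → X}

theorem antitone_dist_of_lipschitzWith_one (hT : LipschitzWith 1 T)
    (hx : ∀ n, x (n + 1) = T (x n)) {w : X} (hw : IsFixedPt T w) :
    Antitone fun n => dist (x n) w :=
  antitone_nat_of_succ_le fun n =>
    calc dist (x (n + 1)) w = dist (T (x n)) (T w) := by rw [hx, hw.eq]
      _ ≤ dist (x n) w := by simpa only [NNReal.coe_one, one_mul] using hT.dist_le_mul (x n) w

theorem tendsto_of_antitone_dist_of_tendsto_subseq {z : X}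
    (hanti : Antitone fun n => dist (x n) z) {φ : ℕ → ℕ} (hφ : StrictMono φ)
    (hsub : Tendsto (x ∘ φ) atTop (𝓝 z)) : Tendsto x atTop (𝓝 z) := by
  rw [tendsto_iff_dist_tendsto_zero] at hsub ⊢
  exact (tendsto_iff_tendsto_subseq_of_antitone hanti hφ.tendsto_atTop).2 hsub

theorem isFixedPt_of_tendsto_subseq (hT : Continuous T) (hx : ∀ n, x (n + 1) = T (x n))
    (hreg : Tendsto (fun n => dist (x n) (x (n + 1))) atTop (𝓝 0))
    {φ : ℕ → ℕ} (hφ : StrictMono φ) {z : X} (hsub : Tendsto (x ∘ φ) atTop (𝓝 z)) :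
    IsFixedPt T z := by
  have hsucc : Tendsto (fun k => x (φ k + 1)) atTop (𝓝 z) :=
    hsub.congr_dist (hreg.comp hφ.tendsto_atTop)
  simp only [hx] at hsucc
  exact tendsto_nhds_unique ((hT.tendsto z).comp hsub) hsucc

theorem exists_isFixedPt_tendsto_of_lipschitzWith_one [ProperSpace X] (hT : LipschitzWith 1 T)
    (hfix : ∃ y, IsFixedPt T y) (hx : ∀ n, x (n + 1) = T (x n))
    (hreg : Tendsto (fun n => dist (x n) (x (n + 1))) atTop (𝓝 0)) :
    ∃ z, IsFixedPt T z ∧ Tendsto x atTop (𝓝 z) := by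
  obtain ⟨y, hy⟩ := hfix
  have hbdd (n : ℕ) : x n ∈ Metric.closedBall y (dist (x 0) y) :=
    antitone_dist_of_lipschitzWith_one hT hx hy (Nat.zero_le n)
  obtain ⟨z, -, φ, hφ, hsub⟩ := (isCompact_closedBall y _).tendsto_subseq hbdd
  have hz : IsFixedPt T z := isFixedPt_of_tendsto_subseq hT.continuous hx hreg hφ hsub
  exact ⟨z, hz, tendsto_of_antitone_dist_of_tendsto_subseq
    (antitone_dist_of_lipschitzWith_one hT hx hz) hφ hsub⟩

end NonexpansiveOrbit

/-- A nonexpansive iteration with vanishing successive differences converges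
to a fixed point. -/
theorem stmt_6 {E : Type*} [NormedAddCommGroup E] [InnerProductSpace ℝ E]
    [FiniteDimensional ℝ E]
    (T : E → E)
    (hT : ∀ x y : E, ‖T x - T y‖ ≤ ‖x - y‖)
    (hfix : ∃ y, T y = y)
    (x : ℕ → E)
    (hiter : ∀ n, x (n + 1) = T (x n))
    (hdiff : Tendsto (fun n => ‖x (n + 1) - x n‖) atTop (𝓝 0)) :
    ∃ z, T z = z ∧ Tendsto x atTop (𝓝 z) := by
  have hLip : LipschitzWith 1 T := .mk_one fun a b => by simpa only [dist_eq_norm] using hT a b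
  have hreg : Tendsto (fun n => dist (x n) (x (n + 1))) atTop (𝓝 0) := by
    simpa only [dist_eq_norm'] using hdiff
  exact exists_isFixedPt_tendsto_of_lipschitzWith_one hLip hfix hiter hreg
end

section
/- Let f : E → ℝ be α-strongly convex and differentiable with unique minimizer x*. Then for all x ∈ E, f(x) - f(x*) ≤ (1/(2α))‖∇f(x)‖² (the Polyak–Łojasiewicz inequality). -/
open scoped RealInnerProductSpace

/-! Strong convexity bounds `f` below by the quadratic model
`f x + ⟪∇f x, y - x⟫ + α/2 ‖y - x‖²`, whose minimum over `y` is `f x - ‖∇f x‖² / (2α)`;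
evaluating the bound at `y = x*` gives the inequality. -/

theorem ConvexOn.add_fderiv_sub_le {F : Type*} [NormedAddCommGroup F] [NormedSpace ℝ F]
    {s : Set F} {g : F → ℝ} {g' : F →L[ℝ] ℝ} {x y : F} (hg : ConvexOn ℝ s g)
    (hx : x ∈ s) (hy : y ∈ s) (hd : HasFDerivAt g g' x) :
    g x + g' (y - x) ≤ g y := by
  set L : ℝ →ᵃ[ℝ] F := AffineMap.lineMap x y
  have hL : HasDerivAt L (y - x) 0 := AffineMap.hasDerivAt_lineMap
  have hd' : HasFDerivAt g g' (L 0) := by simpa [L] using hd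
  have hslope := (hg.comp_affineMap L).le_slope_of_hasDerivAt (x := 0) (y := 1)
    (by simpa [L] using hx) (by simpa [L] using hy) zero_lt_one (hd'.comp_hasDerivAt 0 hL)
  simp only [slope_def_field, Function.comp_apply, L, AffineMap.lineMap_apply_zero,
    AffineMap.lineMap_apply_one, sub_zero, div_one] at hslope
  linarith

section

variable {E : Type*} [NormedAddCommGroup E] [InnerProductSpace ℝ E]

theorem neg_norm_sq_div_le_inner_add_sq {m : ℝ} (hm : 0 < m) (a d : E) :
    -(‖a‖ ^ 2 / (2 * m)) ≤ ⟪a, d⟫ + m / 2 * ‖d‖ ^ 2 := by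
  have h : 0 ≤ ‖a + m • d‖ ^ 2 := sq_nonneg _
  rw [norm_add_sq_real, inner_smul_right, norm_smul, mul_pow, Real.norm_of_nonneg hm.le] at h
  rw [neg_le, neg_add, ← sub_eq_add_neg, le_div_iff₀ (by positivity)]
  nlinarith

variable [CompleteSpace E] {s : Set E} {m : ℝ} {f : E → ℝ} {f' x y : E}

theorem StrongConvexOn.add_inner_add_sq_le_of_hasGradientAt (hf : StrongConvexOn s m f)
    (hx : x ∈ s) (hy : y ∈ s) (hd : HasGradientAt f f' x) :
    f x + ⟪f', y - x⟫ + m / 2 * ‖y - x‖ ^ 2 ≤ f y := by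
  have hq : HasFDerivAt (fun z => m / 2 * ‖z‖ ^ 2) ((m / 2) • 2 • innerSL ℝ x) x :=
    (hasStrictFDerivAt_norm_sq x).hasFDerivAt.const_mul (m / 2)
  have key := (strongConvexOn_iff_convex.mp hf).add_fderiv_sub_le hx hy
    (hd.hasFDerivAt.sub hq)
  have hy' : ‖y‖ ^ 2 = ‖x‖ ^ 2 + 2 * ⟪x, y - x⟫ + ‖y - x‖ ^ 2 := by
    rw [← norm_add_sq_real, add_sub_cancel]
  simp only [sub_apply, smul_apply, InnerProductSpace.toDual_apply_apply, innerSL_apply_apply,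
    smul_eq_mul, nsmul_eq_mul] at key
  rw [hy'] at key
  linarith

theorem StrongConvexOn.sub_le_norm_sq_div_of_hasGradientAt (hm : 0 < m)
    (hf : StrongConvexOn s m f) (hx : x ∈ s) (hy : y ∈ s) (hd : HasGradientAt f f' x) :
    f x - f y ≤ ‖f'‖ ^ 2 / (2 * m) := by
  have hlower := hf.add_inner_add_sq_le_of_hasGradientAt hx hy hd
  have hmodel := neg_norm_sq_div_le_inner_add_sq hm f' (y - x)
  linarith

end

theorem stmt_8_general {E : Type*} [NormedAddCommGroup E] [InnerProductSpace ℝ E]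
    [FiniteDimensional ℝ E]
    (f : E → ℝ) (f' : E → E) (α : ℝ) (hα : 0 < α)
    (hsc : ConvexOn ℝ Set.univ (fun x => f x - α / 2 * ‖x‖ ^ 2))
    (hdiff : ∀ x, HasGradientAt f (f' x) x)
    (xstar : E) :
    ∀ x : E, f x - f xstar ≤ 1 / (2 * α) * ‖f' x‖ ^ 2 := by
  intro x
  rw [one_div_mul_eq_div]
  exact (strongConvexOn_iff_convex.mpr hsc).sub_le_norm_sq_div_of_hasGradientAt hα
    (Set.mem_univ x) (Set.mem_univ xstar) (hdiff x)

/-- Polyak–Łojasiewicz inequality for an `α`-strongly convex differentiable function. -/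
theorem stmt_8 {E : Type*} [NormedAddCommGroup E] [InnerProductSpace ℝ E]
    [FiniteDimensional ℝ E]
    (f : E → ℝ) (f' : E → E) (α : ℝ) (hα : 0 < α)
    (hsc : ConvexOn ℝ Set.univ (fun x => f x - α / 2 * ‖x‖ ^ 2))
    (hdiff : ∀ x, HasGradientAt f (f' x) x)
    (xstar : E) (hmin : ∀ x, f xstar ≤ f x) :
    ∀ x : E, f x - f xstar ≤ 1 / (2 * α) * ‖f' x‖ ^ 2 :=
  stmt_8_general f f' α hα hsc hdiff xstar
end

section
/- Let f : E → ℝ ∪ {+∞} be proper, convex, lower semicontinuous. Then prox_f is firmly nonexpansive: for all x, y, ‖prox_f(x) - prox_f(y)‖² + ‖(x - prox_f(x)) - (y - prox_f(y))‖² ≤ ‖x - y‖². In particular prox_f and Id - prox_f are 1-Lipschitz. -/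
/-!
The point `p = prox_f x` is characterised by the variational inequality
`⟪x - p, z - p⟫ ≤ f z - f p` for all `z`: compare the value of `f + ‖x - ·‖² / 2` at `p` with
its value at `p + t (z - p)`, bound `f` there by convexity, divide by `t` and let `t → 0⁺`.
Adding the inequalities for `(x, p)` at `z = q` and for `(y, q)` at `z = p` cancels `f` and
gives `‖p - q‖² ≤ ⟪x - y, p - q⟫`, which is firm nonexpansiveness rewritten.
-/

open Filter Topology

section Prox

variable {E : Type*} [NormedAddCommGroup E]

/-- `IsProx f x p` says that `p = prox_f x`. -/
def IsProx (f : E → EReal) (x p : E) : Prop :=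
  ∀ z : E, f p + ((‖x - p‖ ^ 2 / 2 : ℝ) : EReal) ≤ f z + ((‖x - z‖ ^ 2 / 2 : ℝ) : EReal)

theorem IsProx.ne_top {f : E → EReal} {x p z₀ : E} (hp : IsProx f x p) (hz₀ : f z₀ ≠ ⊤) :
    f p ≠ ⊤ := by
  intro hpt
  have h := hp z₀
  rw [hpt, EReal.top_add_coe, top_le_iff] at h
  exact EReal.add_ne_top hz₀ (EReal.coe_ne_top _) h

variable [InnerProductSpace ℝ E]

theorem norm_sub_sub_smul_sq (u v : E) (t : ℝ) :
    ‖u - t • v‖ ^ 2 = ‖u‖ ^ 2 - 2 * t * inner ℝ u v + t ^ 2 * ‖v‖ ^ 2 := by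
  rw [norm_sub_sq_real, real_inner_smul_right, norm_smul, mul_pow, Real.norm_eq_abs, sq_abs]
  ring

theorem IsProx.inner_le {f : E → EReal}
    (hconvex : ∀ x y : E, ∀ a b : ℝ, 0 ≤ a → 0 ≤ b → a + b = 1 →
      f (a • x + b • y) ≤ (a : EReal) * f x + (b : EReal) * f y)
    {x p z : E} {fp fz : ℝ} (hp : IsProx f x p) (hfp : f p = fp) (hfz : f z = fz) :
    inner ℝ (x - p) (z - p) ≤ fz - fp := by
  have hsmall : ∀ t : ℝ, 0 < t → t ≤ 1 →
      inner ℝ (x - p) (z - p) - (fz - fp) ≤ t * (‖z - p‖ ^ 2 / 2) := by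
    intro t ht ht1
    have hconv := hconvex p z (1 - t) t (by linarith) ht.le (by ring)
    rw [hfp, hfz, ← EReal.coe_mul, ← EReal.coe_mul, ← EReal.coe_add] at hconv
    have hmin := hp ((1 - t) • p + t • z)
    rw [hfp, ← EReal.coe_add] at hmin
    have hreal : fp + ‖x - p‖ ^ 2 / 2
        ≤ (1 - t) * fp + t * fz + ‖x - ((1 - t) • p + t • z)‖ ^ 2 / 2 := by
      rw [← EReal.coe_le_coe_iff, EReal.coe_add]
      exact hmin.trans (add_le_add_left hconv _)
    have hdiff : x - ((1 - t) • p + t • z) = (x - p) - t • (z - p) := by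
      rw [smul_sub, sub_smul, one_smul]; abel
    rw [hdiff, norm_sub_sub_smul_sq] at hreal
    nlinarith
  have hlim : Tendsto (fun t : ℝ => t * (‖z - p‖ ^ 2 / 2)) (𝓝[>] 0) (𝓝 0) := by
    have := (continuous_mul_const (‖z - p‖ ^ 2 / 2)).tendsto 0
    rw [zero_mul] at this
    exact this.mono_left nhdsWithin_le_nhds
  have := ge_of_tendsto hlim <| eventually_of_mem (Ioc_mem_nhdsGT one_pos)
    fun t ht => hsmall t ht.1 ht.2
  linarith

theorem norm_sq_add_norm_sq_le_of_inner_add_inner_nonpos {x y p q : E}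
    (h : inner ℝ (x - p) (q - p) + inner ℝ (y - q) (p - q) ≤ 0) :
    ‖p - q‖ ^ 2 + ‖(x - p) - (y - q)‖ ^ 2 ≤ ‖x - y‖ ^ 2 := by
  have hinner : inner ℝ (p - q) ((x - p) - (y - q))
      = -(inner ℝ (x - p) (q - p) + inner ℝ (y - q) (p - q)) := by
    rw [← neg_sub p q, inner_neg_right, real_inner_comm, inner_sub_left, real_inner_comm]
    ring
  have hsplit : x - y = (p - q) + ((x - p) - (y - q)) := by abel
  rw [hsplit, norm_add_sq_real, hinner]
  linarith

end Prox

theorem stmt_14_general {E : Type*} [NormedAddCommGroup E] [InnerProductSpace ℝ E]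
    (f : E → EReal)
    (hproper : (∃ x, f x ≠ ⊤) ∧ ∀ x, f x ≠ ⊥)
    (hconvex : ∀ x y : E, ∀ a b : ℝ, 0 ≤ a → 0 ≤ b → a + b = 1 →
      f (a • x + b • y) ≤ (a : EReal) * f x + (b : EReal) * f y)
    (x y p q : E)
    (hp : ∀ z : E, f p + ((‖x - p‖ ^ 2 / 2 : ℝ) : EReal)
        ≤ f z + ((‖x - z‖ ^ 2 / 2 : ℝ) : EReal))
    (hq : ∀ z : E, f q + ((‖y - q‖ ^ 2 / 2 : ℝ) : EReal)
        ≤ f z + ((‖y - z‖ ^ 2 / 2 : ℝ) : EReal)) :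
    ‖p - q‖ ^ 2 + ‖(x - p) - (y - q)‖ ^ 2 ≤ ‖x - y‖ ^ 2 ∧
    ‖p - q‖ ≤ ‖x - y‖ ∧ ‖(x - p) - (y - q)‖ ≤ ‖x - y‖ := by
  obtain ⟨⟨z₀, hz₀⟩, hbot⟩ := hproper
  have hfp := EReal.coe_toReal (IsProx.ne_top hp hz₀) (hbot p)
  have hfq := EReal.coe_toReal (IsProx.ne_top hq hz₀) (hbot q)
  have hpq := IsProx.inner_le hconvex hp hfp.symm hfq.symm
  have hqp := IsProx.inner_le hconvex hq hfq.symm hfp.symm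
  have hfirm : ‖p - q‖ ^ 2 + ‖(x - p) - (y - q)‖ ^ 2 ≤ ‖x - y‖ ^ 2 :=
    norm_sq_add_norm_sq_le_of_inner_add_inner_nonpos (by linarith)
  refine ⟨hfirm, ?_, ?_⟩
  · exact le_of_pow_le_pow_left₀ two_ne_zero (norm_nonneg _)
      (by linarith [sq_nonneg ‖(x - p) - (y - q)‖])
  · exact le_of_pow_le_pow_left₀ two_ne_zero (norm_nonneg _)
      (by linarith [sq_nonneg ‖p - q‖])

/-- The proximal operator of a proper convex lsc function is firmly nonexpansive,
hence `prox_f` and `Id - prox_f` are 1-Lipschitz. -/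
theorem stmt_14 {E : Type*} [NormedAddCommGroup E] [InnerProductSpace ℝ E]
    [FiniteDimensional ℝ E]
    (f : E → EReal)
    (hproper : (∃ x, f x ≠ ⊤) ∧ ∀ x, f x ≠ ⊥)
    (hconvex : ∀ x y : E, ∀ a b : ℝ, 0 ≤ a → 0 ≤ b → a + b = 1 →
      f (a • x + b • y) ≤ (a : EReal) * f x + (b : EReal) * f y)
    (hlsc : LowerSemicontinuous f)
    (x y p q : E)
    (hp : ∀ z : E, f p + ((‖x - p‖ ^ 2 / 2 : ℝ) : EReal)
        ≤ f z + ((‖x - z‖ ^ 2 / 2 : ℝ) : EReal))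
    (hq : ∀ z : E, f q + ((‖y - q‖ ^ 2 / 2 : ℝ) : EReal)
        ≤ f z + ((‖y - z‖ ^ 2 / 2 : ℝ) : EReal)) :
    ‖p - q‖ ^ 2 + ‖(x - p) - (y - q)‖ ^ 2 ≤ ‖x - y‖ ^ 2 ∧
    ‖p - q‖ ≤ ‖x - y‖ ∧ ‖(x - p) - (y - q)‖ ≤ ‖x - y‖ :=
  stmt_14_general f hproper hconvex x y p q hp hq
end

section
/- Let f be a proper, lower semicontinuous, α-strongly convex function on E with α > 0, and let γ > 0. Then prox_{γf} is (1/(1 + αγ))-Lipschitz; more precisely, ⟨prox_{γf}(x) - prox_{γf}(y), x - y⟩ ≥ (1 + γα)‖prox_{γf}(x) - prox_{γf}(y)‖² for all x, y. -/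
/-!
Comparing the prox objective at `p` with its value at `(1 - t) • p + t • q`, strong convexity
gives, after dividing by `t` and letting `t → 0`, the three-point inequality
`γ (f p - f q) + γ α / 2 ‖p - q‖² ≤ ⟪x - p, p - q⟫`. Adding it to its counterpart for `(y, q)`
cancels the values of `f` and leaves `(1 + γ α) ‖p - q‖² ≤ ⟪p - q, x - y⟫`, and Cauchy–Schwarz
turns this into the Lipschitz bound. Only points of the effective domain `{z | f z ≠ ⊤}`
enter the argument, so it runs for the real function `(f ·).toReal` on that convex set.
-/

open scoped RealInnerProductSpace
open Set Filter Topology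

section

variable {E : Type*} [NormedAddCommGroup E]

lemma StrongConvexOn.const_mul [NormedSpace ℝ E] {s : Set E} {g : E → ℝ} {m c : ℝ}
    (hc : 0 ≤ c) (hg : StrongConvexOn s m g) : StrongConvexOn s (c * m) fun z ↦ c * g z := by
  refine ⟨hg.1, fun x hx y hy a b ha hb hab ↦ ?_⟩
  have h := mul_le_mul_of_nonneg_left (hg.2 hx hy ha hb hab) hc
  simp only [smul_eq_mul] at h ⊢
  linarith

lemma EReal.ne_top_of_add_coe_le_coe {a : EReal} {r s : ℝ} (h : a + r ≤ s) : a ≠ ⊤ := by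
  rintro rfl
  simp at h

section EReal

variable {f : E → EReal}

lemma strongConvexOn_toReal_of_forall_add_le [NormedSpace ℝ E] (hbot : ∀ x, f x ≠ ⊥) {α : ℝ}
    (hsc : ∀ x y : E, ∀ a b : ℝ, 0 ≤ a → 0 ≤ b → a + b = 1 →
      f (a • x + b • y) + ((a * b * α / 2 * ‖x - y‖ ^ 2 : ℝ) : EReal)
        ≤ (a : EReal) * f x + (b : EReal) * f y) :
    StrongConvexOn {z | f z ≠ ⊤} α fun z ↦ (f z).toReal := by
  have hsc' : ∀ ⦃x⦄, f x ≠ ⊤ → ∀ ⦃y⦄, f y ≠ ⊤ → ∀ ⦃a b : ℝ⦄, 0 ≤ a → 0 ≤ b → a + b = 1 →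
      f (a • x + b • y) + ((a * b * α / 2 * ‖x - y‖ ^ 2 : ℝ) : EReal)
        ≤ ((a * (f x).toReal + b * (f y).toReal : ℝ) : EReal) := by
    intro x hx y hy a b ha hb hab
    have h := hsc x y a b ha hb hab
    rwa [← EReal.coe_toReal hx (hbot x), ← EReal.coe_toReal hy (hbot y)] at h
  refine ⟨fun x hx y hy a b ha hb hab ↦ EReal.ne_top_of_add_coe_le_coe (hsc' hx hy ha hb hab),
    fun x hx y hy a b ha hb hab ↦ ?_⟩
  have h := hsc' hx hy ha hb hab
  rw [← EReal.coe_toReal (EReal.ne_top_of_add_coe_le_coe h) (hbot _)] at h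
  have h' : (f (a • x + b • y)).toReal + a * b * α / 2 * ‖x - y‖ ^ 2
      ≤ a * (f x).toReal + b * (f y).toReal := by exact_mod_cast h
  simp only [smul_eq_mul]
  linarith

lemma isMinOn_toReal_of_forall_le (hbot : ∀ x, f x ≠ ⊥) {γ : ℝ} (hγ : 0 < γ)
    (hdom : ∃ z, f z ≠ ⊤) {x p : E}
    (hp : ∀ z : E, (γ : EReal) * f p + ((‖x - p‖ ^ 2 / 2 : ℝ) : EReal)
        ≤ (γ : EReal) * f z + ((‖x - z‖ ^ 2 / 2 : ℝ) : EReal)) :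
    f p ≠ ⊤ ∧ IsMinOn (fun z ↦ γ * (f z).toReal + ‖x - z‖ ^ 2 / 2) {z | f z ≠ ⊤} p := by
  have hreal : ∀ z, f z ≠ ⊤ → (γ : EReal) * f z + ((‖x - z‖ ^ 2 / 2 : ℝ) : EReal)
      = ((γ * (f z).toReal + ‖x - z‖ ^ 2 / 2 : ℝ) : EReal) := fun z hz ↦ by
    rw [← EReal.coe_toReal hz (hbot z)]
    norm_cast
  obtain ⟨z₀, hz₀⟩ := hdom
  have hpdom : f p ≠ ⊤ := by
    rintro hptop
    have h := hp z₀
    rw [hreal z₀ hz₀, hptop, EReal.coe_mul_top_of_pos hγ, EReal.top_add_coe] at h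
    exact EReal.coe_ne_top _ (top_le_iff.mp h)
  refine ⟨hpdom, fun z hz ↦ ?_⟩
  have h := hp z
  rw [hreal z hz, hreal p hpdom] at h
  exact_mod_cast h

end EReal

variable [InnerProductSpace ℝ E]

lemma StrongConvexOn.sub_add_le_inner_of_isMinOn {s : Set E} {g : E → ℝ} {m : ℝ}
    (hg : StrongConvexOn s m g) {x p q : E} (hp : p ∈ s) (hq : q ∈ s)
    (hmin : IsMinOn (fun z ↦ g z + ‖x - z‖ ^ 2 / 2) s p) :
    g p - g q + m / 2 * ‖p - q‖ ^ 2 ≤ ⟪x - p, p - q⟫ := by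
  set N := ‖p - q‖ ^ 2
  have hsegment : ∀ t ∈ Ioo (0 : ℝ) 1,
      g p - g q + m / 2 * N - t * (m / 2 * N + N / 2) ≤ ⟪x - p, p - q⟫ := by
    rintro t ⟨ht0, ht1⟩
    have hz : (1 - t) • p + t • q ∈ s := hg.1 hp hq (by linarith) ht0.le (by ring)
    have hconv := hg.2 hp hq (by linarith : (0 : ℝ) ≤ 1 - t) ht0.le (by ring)
    have hopt : g p + ‖x - p‖ ^ 2 / 2 ≤ g _ + ‖x - ((1 - t) • p + t • q)‖ ^ 2 / 2 := hmin hz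
    have hnorm : ‖x - ((1 - t) • p + t • q)‖ ^ 2
        = ‖x - p‖ ^ 2 + 2 * (t * ⟪x - p, p - q⟫) + t ^ 2 * N := by
      rw [show x - ((1 - t) • p + t • q) = (x - p) + t • (p - q) by module, norm_add_sq_real,
        real_inner_smul_right, norm_smul, mul_pow, Real.norm_eq_abs, sq_abs]
    simp only [smul_eq_mul] at hconv
    have : t * (g p - g q + m / 2 * N - t * (m / 2 * N + N / 2) - ⟪x - p, p - q⟫) ≤ 0 := by
      nlinarith
    exact sub_nonpos.mp (nonpos_of_mul_nonpos_right this ht0)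
  have hlim : Tendsto (fun t : ℝ ↦ g p - g q + m / 2 * N - t * (m / 2 * N + N / 2))
      (𝓝[>] 0) (𝓝 (g p - g q + m / 2 * N)) := by
    have : Continuous fun t : ℝ ↦ g p - g q + m / 2 * N - t * (m / 2 * N + N / 2) := by
      fun_prop
    simpa using this.tendsto 0 |>.mono_left nhdsWithin_le_nhds
  exact le_of_tendsto hlim (eventually_of_mem (Ioo_mem_nhdsGT one_pos) hsegment)

lemma StrongConvexOn.mul_norm_sq_le_inner_of_isMinOn {s : Set E} {g : E → ℝ} {m : ℝ}
    (hg : StrongConvexOn s m g) {x y p q : E} (hp : p ∈ s) (hq : q ∈ s)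
    (hminp : IsMinOn (fun z ↦ g z + ‖x - z‖ ^ 2 / 2) s p)
    (hminq : IsMinOn (fun z ↦ g z + ‖y - z‖ ^ 2 / 2) s q) :
    (1 + m) * ‖p - q‖ ^ 2 ≤ ⟪p - q, x - y⟫ := by
  have hpq := hg.sub_add_le_inner_of_isMinOn hp hq hminp
  have hqp := hg.sub_add_le_inner_of_isMinOn hq hp hminq
  have hsum : ⟪x - p, p - q⟫ + ⟪y - q, q - p⟫ = ⟪p - q, x - y⟫ - ‖p - q‖ ^ 2 := by
    rw [← real_inner_self_eq_norm_sq, ← neg_sub p q, inner_neg_right, ← sub_eq_add_neg,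
      ← inner_sub_left, real_inner_comm, ← inner_sub_right]
    congr 1
    abel
  rw [norm_sub_rev q p] at hqp
  linarith

lemma norm_le_div_of_mul_norm_sq_le_inner {u v : E} {c : ℝ} (hc : 0 < c)
    (h : c * ‖u‖ ^ 2 ≤ ⟪u, v⟫) : ‖u‖ ≤ 1 / c * ‖v‖ := by
  rw [one_div_mul_eq_div, le_div_iff₀' hc]
  rcases (norm_nonneg u).eq_or_lt with hu | hu
  · rw [← hu, mul_zero]
    exact norm_nonneg v
  · have := h.trans (real_inner_le_norm u v)
    nlinarith

end

theorem stmt_15_general {E : Type*} [NormedAddCommGroup E] [InnerProductSpace ℝ E]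
    (f : E → EReal) (α γ : ℝ) (hα : 0 < α) (hγ : 0 < γ)
    (hproper : (∃ x, f x ≠ ⊤) ∧ ∀ x, f x ≠ ⊥)
    (hsc : ∀ x y : E, ∀ a b : ℝ, 0 ≤ a → 0 ≤ b → a + b = 1 →
      f (a • x + b • y) + ((a * b * α / 2 * ‖x - y‖ ^ 2 : ℝ) : EReal)
        ≤ (a : EReal) * f x + (b : EReal) * f y)
    (x y p q : E)
    (hp : ∀ z : E, (γ : EReal) * f p + ((‖x - p‖ ^ 2 / 2 : ℝ) : EReal)
        ≤ (γ : EReal) * f z + ((‖x - z‖ ^ 2 / 2 : ℝ) : EReal))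
    (hq : ∀ z : E, (γ : EReal) * f q + ((‖y - q‖ ^ 2 / 2 : ℝ) : EReal)
        ≤ (γ : EReal) * f z + ((‖y - z‖ ^ 2 / 2 : ℝ) : EReal)) :
    ⟪p - q, x - y⟫ ≥ (1 + γ * α) * ‖p - q‖ ^ 2 ∧
    ‖p - q‖ ≤ (1 / (1 + α * γ)) * ‖x - y‖ := by
  obtain ⟨hdom, hbot⟩ := hproper
  have hg := (strongConvexOn_toReal_of_forall_add_le hbot hsc).const_mul hγ.le
  obtain ⟨hpdom, hminp⟩ := isMinOn_toReal_of_forall_le hbot hγ hdom hp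
  obtain ⟨hqdom, hminq⟩ := isMinOn_toReal_of_forall_le hbot hγ hdom hq
  have hmono := hg.mul_norm_sq_le_inner_of_isMinOn hpdom hqdom hminp hminq
  refine ⟨hmono, ?_⟩
  rw [mul_comm α γ]
  exact norm_le_div_of_mul_norm_sq_le_inner (by positivity) hmono

/-- The proximal operator of an `α`-strongly convex function is a
`1/(1+αγ)`-Lipschitz contraction. -/
theorem stmt_15 {E : Type*} [NormedAddCommGroup E] [InnerProductSpace ℝ E]
    [FiniteDimensional ℝ E]
    (f : E → EReal) (α γ : ℝ) (hα : 0 < α) (hγ : 0 < γ)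
    (hproper : (∃ x, f x ≠ ⊤) ∧ ∀ x, f x ≠ ⊥)
    (hlsc : LowerSemicontinuous f)
    (hsc : ∀ x y : E, ∀ a b : ℝ, 0 ≤ a → 0 ≤ b → a + b = 1 →
      f (a • x + b • y) + ((a * b * α / 2 * ‖x - y‖ ^ 2 : ℝ) : EReal)
        ≤ (a : EReal) * f x + (b : EReal) * f y)
    (x y p q : E)
    (hp : ∀ z : E, (γ : EReal) * f p + ((‖x - p‖ ^ 2 / 2 : ℝ) : EReal)
        ≤ (γ : EReal) * f z + ((‖x - z‖ ^ 2 / 2 : ℝ) : EReal))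
    (hq : ∀ z : E, (γ : EReal) * f q + ((‖y - q‖ ^ 2 / 2 : ℝ) : EReal)
        ≤ (γ : EReal) * f z + ((‖y - z‖ ^ 2 / 2 : ℝ) : EReal)) :
    ⟪p - q, x - y⟫ ≥ (1 + γ * α) * ‖p - q‖ ^ 2 ∧
    ‖p - q‖ ≤ (1 / (1 + α * γ)) * ‖x - y‖ :=
  stmt_15_general f α γ hα hγ hproper hsc x y p q hp hq
end

section
/- Krasnosel'skii–Mann: Let D ⊆ E be nonempty closed convex, T : D → D nonexpansive with a fixed point, (λₙ) a sequence in [0,1] with Σ λₙ(1 - λₙ) = +∞, and x₀ ∈ D. Define xₙ₊₁ = xₙ + λₙ(T(xₙ) - xₙ). Then (xₙ) converges to a fixed point of T. -/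
/-!
For a fixed point `z`, the identity
`‖u + t • (v - u)‖² = ‖u‖² + t (‖v‖² - ‖u‖²) - t (1 - t) ‖v - u‖²` with `u = xₙ - z`,
`v = T xₙ - z` and `‖v‖ ≤ ‖u‖` gives `‖xₙ₊₁ - z‖² ≤ ‖xₙ - z‖² - λₙ (1 - λₙ) ‖T xₙ - xₙ‖²`.
Hence `(xₙ)` is Fejér monotone with respect to `Fix T` and `∑ λₙ (1 - λₙ) ‖T xₙ - xₙ‖²` is
bounded. The residual `‖T xₙ - xₙ‖` is nonincreasing, so divergence of `∑ λₙ (1 - λₙ)` forces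
it to `0`. In finite dimension a subsequence converges; its limit is a fixed point by
continuity of `T`, and Fejér monotonicity upgrades this to convergence of the whole sequence.
-/

open Filter Topology

section InnerProduct

variable {E : Type*} [NormedAddCommGroup E] [InnerProductSpace ℝ E]

theorem norm_add_smul_sub_sq (u v : E) (t : ℝ) :
    ‖u + t • (v - u)‖ ^ 2 = ‖u‖ ^ 2 + t * (‖v‖ ^ 2 - ‖u‖ ^ 2) - t * (1 - t) * ‖v - u‖ ^ 2 := by
  have hv : ‖v‖ ^ 2 = ‖u‖ ^ 2 + 2 * inner ℝ u (v - u) + ‖v - u‖ ^ 2 := by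
    rw [← norm_add_sq_real, add_sub_cancel]
  rw [norm_add_sq_real, norm_smul, real_inner_smul_right, mul_pow, Real.norm_eq_abs, sq_abs, hv]
  ring

theorem norm_add_smul_sub_sub_sq_le {y w z : E} {t : ℝ} (ht : 0 ≤ t) (hwz : ‖w - z‖ ≤ ‖y - z‖) :
    ‖y + t • (w - y) - z‖ ^ 2 ≤ ‖y - z‖ ^ 2 - t * (1 - t) * ‖w - y‖ ^ 2 := by
  have key := norm_add_smul_sub_sq (y - z) (w - z) t
  rw [sub_sub_sub_cancel_right, sub_add_eq_add_sub] at key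
  have hsq : ‖w - z‖ ^ 2 ≤ ‖y - z‖ ^ 2 := pow_le_pow_left₀ (norm_nonneg _) hwz 2
  nlinarith

end InnerProduct

theorem tendsto_zero_of_antitone_of_sum_mul_le {s w : ℕ → ℝ} {C : ℝ} (hs : Antitone s)
    (hs0 : ∀ n, 0 ≤ s n) (hw : ∀ n, 0 ≤ w n)
    (hW : Tendsto (fun N => ∑ n ∈ Finset.range N, w n) atTop atTop)
    (hC : ∀ N, ∑ n ∈ Finset.range N, w n * s n ≤ C) :
    Tendsto s atTop (𝓝 0) := by
  have hbound : ∀ N, s N * ∑ n ∈ Finset.range N, w n ≤ C := fun N => calc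
    s N * ∑ n ∈ Finset.range N, w n = ∑ n ∈ Finset.range N, w n * s N := by
      rw [Finset.mul_sum]; simp only [mul_comm]
    _ ≤ ∑ n ∈ Finset.range N, w n * s n := Finset.sum_le_sum fun n hn =>
      mul_le_mul_of_nonneg_left (hs (Finset.mem_range.mp hn).le) (hw n)
    _ ≤ C := hC N
  refine squeeze_zero' (Eventually.of_forall hs0) ?_ ((tendsto_const_nhds (x := C)).div_atTop hW)
  filter_upwards [hW.eventually_gt_atTop 0] with N hN
  exact (le_div_iff₀ hN).mpr (hbound N)

theorem exists_tendsto_of_fejer {α : Type*} [MetricSpace α] [ProperSpace α] {F : Set α}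
    {x : ℕ → α} (hF : F.Nonempty) (hfejer : ∀ z ∈ F, Antitone fun n => dist (x n) z)
    (hcluster : ∀ z (φ : ℕ → ℕ), StrictMono φ → Tendsto (x ∘ φ) atTop (𝓝 z) → z ∈ F) :
    ∃ z ∈ F, Tendsto x atTop (𝓝 z) := by
  obtain ⟨z₀, hz₀⟩ := hF
  have hball : ∀ n, x n ∈ Metric.closedBall z₀ (dist (x 0) z₀) :=
    fun n => hfejer z₀ hz₀ (Nat.zero_le n)
  obtain ⟨z, -, φ, hφ, hxφ⟩ := (isCompact_closedBall z₀ _).tendsto_subseq hball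
  have hz := hcluster z φ hφ hxφ
  refine ⟨z, hz, tendsto_iff_dist_tendsto_zero.mpr ?_⟩
  exact (tendsto_iff_tendsto_subseq_of_antitone (hfejer z hz) hφ.tendsto_atTop).mpr
    (tendsto_iff_dist_tendsto_zero.mp hxφ)

theorem ContinuousOn.apply_eq_of_tendsto_sub {E : Type*} [TopologicalSpace E] [AddGroup E]
    [IsTopologicalAddGroup E] [T2Space E] {D : Set E}
    {T : E → E} (hT : ContinuousOn T D) (hD : IsClosed D) {y : ℕ → E} {z : E}
    (hyD : ∀ n, y n ∈ D) (hy : Tendsto y atTop (𝓝 z))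
    (hres : Tendsto (fun n => T (y n) - y n) atTop (𝓝 0)) :
    z ∈ D ∧ T z = z := by
  have hzD : z ∈ D := hD.mem_of_tendsto hy (Eventually.of_forall hyD)
  have hTy : Tendsto (fun n => T (y n)) atTop (𝓝 (T z)) :=
    (hT z hzD).tendsto.comp (tendsto_nhdsWithin_iff.mpr ⟨hy, Eventually.of_forall hyD⟩)
  exact ⟨hzD, sub_eq_zero.mp (tendsto_nhds_unique (hTy.sub hy) hres)⟩

namespace KrasnoselskiiMann

open Function

variable {E : Type*} [NormedAddCommGroup E] [InnerProductSpace ℝ E] {D : Set E} {T : E → E}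
  {lam : ℕ → ℝ} {x : ℕ → E}

theorem norm_residual_step_le (hne : ∀ x ∈ D, ∀ y ∈ D, ‖T x - T y‖ ≤ ‖x - y‖) {y : E} {t : ℝ}
    (ht : t ∈ Set.Icc (0 : ℝ) 1) (hy : y ∈ D) (hy' : y + t • (T y - y) ∈ D) :
    ‖T (y + t • (T y - y)) - (y + t • (T y - y))‖ ≤ ‖T y - y‖ := by
  obtain ⟨ht0, ht1⟩ := ht
  calc ‖T (y + t • (T y - y)) - (y + t • (T y - y))‖
      = ‖(T (y + t • (T y - y)) - T y) + (1 - t) • (T y - y)‖ := by congr 1; module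
    _ ≤ ‖(y + t • (T y - y)) - y‖ + (1 - t) * ‖T y - y‖ := by
      grw [norm_add_le, hne _ hy' _ hy, norm_smul, Real.norm_of_nonneg (sub_nonneg.mpr ht1)]
    _ = ‖T y - y‖ := by
      rw [add_sub_cancel_left, norm_smul, Real.norm_of_nonneg ht0]; ring

theorem iterate_mem (hDconv : Convex ℝ D) (hmaps : Set.MapsTo T D D)
    (hlam : ∀ n, lam n ∈ Set.Icc (0 : ℝ) 1) (hx0 : x 0 ∈ D)
    (hiter : ∀ n, x (n + 1) = x n + lam n • (T (x n) - x n)) (n : ℕ) : x n ∈ D := by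
  induction n with
  | zero => exact hx0
  | succ n ih => rw [hiter]; exact hDconv.add_smul_sub_mem ih (hmaps ih) (hlam n)

theorem norm_sub_fixedPt_sq_le (hne : ∀ x ∈ D, ∀ y ∈ D, ‖T x - T y‖ ≤ ‖x - y‖)
    (hlam : ∀ n, 0 ≤ lam n) (hxD : ∀ n, x n ∈ D)
    (hiter : ∀ n, x (n + 1) = x n + lam n • (T (x n) - x n))
    {z : E} (hzD : z ∈ D) (hz : IsFixedPt T z) (n : ℕ) :
    ‖x (n + 1) - z‖ ^ 2 ≤ ‖x n - z‖ ^ 2 - lam n * (1 - lam n) * ‖T (x n) - x n‖ ^ 2 := by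
  rw [hiter]
  exact norm_add_smul_sub_sub_sq_le (hlam n) (by simpa only [hz.eq] using hne _ (hxD n) z hzD)

theorem antitone_dist_fixedPt (hne : ∀ x ∈ D, ∀ y ∈ D, ‖T x - T y‖ ≤ ‖x - y‖)
    (hlam : ∀ n, lam n ∈ Set.Icc (0 : ℝ) 1) (hxD : ∀ n, x n ∈ D)
    (hiter : ∀ n, x (n + 1) = x n + lam n • (T (x n) - x n))
    {z : E} (hzD : z ∈ D) (hz : IsFixedPt T z) :
    Antitone fun n => dist (x n) z := by
  refine antitone_nat_of_succ_le fun n => ?_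
  have hstep := norm_sub_fixedPt_sq_le hne (fun n => (hlam n).1) hxD hiter hzD hz n
  have hweight : 0 ≤ lam n * (1 - lam n) := mul_nonneg (hlam n).1 (sub_nonneg.mpr (hlam n).2)
  rw [dist_eq_norm, dist_eq_norm, ← pow_le_pow_iff_left₀ (norm_nonneg _) (norm_nonneg _)
    two_ne_zero]
  nlinarith [sq_nonneg ‖T (x n) - x n‖]

theorem sum_residual_sq_le (hne : ∀ x ∈ D, ∀ y ∈ D, ‖T x - T y‖ ≤ ‖x - y‖)
    (hlam : ∀ n, 0 ≤ lam n) (hxD : ∀ n, x n ∈ D)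
    (hiter : ∀ n, x (n + 1) = x n + lam n • (T (x n) - x n))
    {z : E} (hzD : z ∈ D) (hz : IsFixedPt T z) (N : ℕ) :
    ∑ n ∈ Finset.range N, lam n * (1 - lam n) * ‖T (x n) - x n‖ ^ 2 ≤ ‖x 0 - z‖ ^ 2 :=
  calc ∑ n ∈ Finset.range N, lam n * (1 - lam n) * ‖T (x n) - x n‖ ^ 2
      ≤ ∑ n ∈ Finset.range N, (‖x n - z‖ ^ 2 - ‖x (n + 1) - z‖ ^ 2) :=
        Finset.sum_le_sum fun n _ => by
          linarith [norm_sub_fixedPt_sq_le hne hlam hxD hiter hzD hz n]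
    _ = ‖x 0 - z‖ ^ 2 - ‖x N - z‖ ^ 2 := Finset.sum_range_sub' _ _
    _ ≤ ‖x 0 - z‖ ^ 2 := sub_le_self _ (sq_nonneg _)

theorem tendsto_norm_residual_zero (hne : ∀ x ∈ D, ∀ y ∈ D, ‖T x - T y‖ ≤ ‖x - y‖)
    (hlam : ∀ n, lam n ∈ Set.Icc (0 : ℝ) 1) (hxD : ∀ n, x n ∈ D)
    (hiter : ∀ n, x (n + 1) = x n + lam n • (T (x n) - x n))
    (hfix : ∃ z ∈ D, IsFixedPt T z)
    (hdiv : Tendsto (fun N => ∑ n ∈ Finset.range N, lam n * (1 - lam n)) atTop atTop) :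
    Tendsto (fun n => ‖T (x n) - x n‖) atTop (𝓝 0) := by
  obtain ⟨z, hzD, hz⟩ := hfix
  have hanti : Antitone fun n => ‖T (x n) - x n‖ := antitone_nat_of_succ_le fun n => by
    have hxD' := hxD (n + 1)
    rw [hiter] at hxD' ⊢
    exact norm_residual_step_le hne (hlam n) (hxD n) hxD'
  have hsq := tendsto_zero_of_antitone_of_sum_mul_le (s := fun n => ‖T (x n) - x n‖ ^ 2)
    (fun m n hmn => pow_le_pow_left₀ (norm_nonneg _) (hanti hmn) 2) (fun n => sq_nonneg _)
    (fun n => mul_nonneg (hlam n).1 (sub_nonneg.mpr (hlam n).2)) hdiv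
    (sum_residual_sq_le hne (fun n => (hlam n).1) hxD hiter hzD hz)
  simpa using hsq.sqrt

end KrasnoselskiiMann

theorem stmt_17_general {E : Type*} [NormedAddCommGroup E] [InnerProductSpace ℝ E]
    [FiniteDimensional ℝ E]
    (D : Set E) (hDc : IsClosed D) (hDconv : Convex ℝ D)
    (T : E → E) (hmaps : Set.MapsTo T D D)
    (hne : ∀ x ∈ D, ∀ y ∈ D, ‖T x - T y‖ ≤ ‖x - y‖)
    (hfix : ∃ z ∈ D, T z = z)
    (lam : ℕ → ℝ) (hlam : ∀ n, lam n ∈ Set.Icc (0 : ℝ) 1)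
    (hdiv : Tendsto (fun N => ∑ n ∈ Finset.range N, lam n * (1 - lam n)) atTop atTop)
    (x : ℕ → E) (hx0 : x 0 ∈ D)
    (hiter : ∀ n, x (n + 1) = x n + lam n • (T (x n) - x n)) :
    ∃ z ∈ D, T z = z ∧ Tendsto x atTop (𝓝 z) := by
  have hxD := KrasnoselskiiMann.iterate_mem hDconv hmaps hlam hx0 hiter
  have hres := KrasnoselskiiMann.tendsto_norm_residual_zero hne hlam hxD hiter hfix hdiv
  have hcont : ContinuousOn T D := (LipschitzOnWith.mk_one fun a ha b hb => by
    simpa only [dist_eq_norm] using hne a ha b hb).continuousOn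
  obtain ⟨z, ⟨hzD, hz⟩, hxz⟩ := exists_tendsto_of_fejer (F := {z | z ∈ D ∧ T z = z}) hfix
    (fun z hz => KrasnoselskiiMann.antitone_dist_fixedPt hne hlam hxD hiter hz.1 hz.2)
    (fun z φ hφ hxφ => hcont.apply_eq_of_tendsto_sub hDc (fun n => hxD (φ n)) hxφ
      (tendsto_zero_iff_norm_tendsto_zero.mpr (hres.comp hφ.tendsto_atTop)))
  exact ⟨z, hzD, hz, hxz⟩

/-- Krasnosel'skii–Mann iteration converges to a fixed point of a nonexpansive map. -/
theorem stmt_17 {E : Type*} [NormedAddCommGroup E] [InnerProductSpace ℝ E]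
    [FiniteDimensional ℝ E]
    (D : Set E) (hDne : D.Nonempty) (hDc : IsClosed D) (hDconv : Convex ℝ D)
    (T : E → E) (hmaps : Set.MapsTo T D D)
    (hne : ∀ x ∈ D, ∀ y ∈ D, ‖T x - T y‖ ≤ ‖x - y‖)
    (hfix : ∃ z ∈ D, T z = z)
    (lam : ℕ → ℝ) (hlam : ∀ n, lam n ∈ Set.Icc (0 : ℝ) 1)
    (hdiv : Tendsto (fun N => ∑ n ∈ Finset.range N, lam n * (1 - lam n)) atTop atTop)
    (x : ℕ → E) (hx0 : x 0 ∈ D)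
    (hiter : ∀ n, x (n + 1) = x n + lam n • (T (x n) - x n)) :
    ∃ z ∈ D, T z = z ∧ Tendsto x atTop (𝓝 z) :=
  stmt_17_general D hDc hDconv T hmaps hne hfix lam hlam hdiv x hx0 hiter
end

section
/- Moreau's identity: Let f : E → ℝ ∪ {+∞} be proper, convex, lower semicontinuous and γ > 0. Then for all x ∈ E, prox_{γf}(x) + γ·prox_{f*/γ}(x/γ) = x, where f*(u) = sup_x ⟨x,u⟩ - f(x) is the convex conjugate. -/
open scoped RealInnerProductSpace
open Filter Topology

/-!
Put `u := γ⁻¹ • (x - p)`. Comparing the prox objective of `γ f` at `p` with its values on the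
segment from `p` to `z` and letting the step go to `0` shows, by convexity, that `u` is a
subgradient of `f` at `p`. Fenchel–Young then holds with equality, `f* u = ⟪p, u⟫ - f p`, which
together with `f* z ≥ ⟪p, z⟫ - f p` says that `p` is a subgradient of `f*` at `u`. As
`x / γ = u + p / γ`, the prox objective of `f* / γ` at `x / γ` exceeds its value at `u` by at
least `‖z - u‖² / 2`, so its minimiser `q` is `u`.
-/

theorem le_of_forall_sub_mul_le {A B a : ℝ} (h : ∀ t : ℝ, 0 < t → t ≤ 1 → A - t * B ≤ a) :
    A ≤ a := by
  have hlim : Tendsto (fun t : ℝ => A - t * B) (𝓝[>] 0) (𝓝 A) := by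
    have : Tendsto (fun t : ℝ => A - t * B) (𝓝 0) (𝓝 (A - 0 * B)) :=
      tendsto_const_nhds.sub (tendsto_id.mul_const B)
    simpa using this.mono_left nhdsWithin_le_nhds
  refine le_of_tendsto hlim ?_
  filter_upwards [Ioc_mem_nhdsGT one_pos] with t ht using h t ht.1 ht.2

section Prox

variable {E : Type*} [NormedAddCommGroup E]

noncomputable def proxObjective (g : E → EReal) (c : ℝ) (y z : E) : EReal :=
  (c : EReal) * g z + ((‖y - z‖ ^ 2 / 2 : ℝ) : EReal)

/-- `q = prox_{c g}(y)`. -/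
def IsProxPoint (g : E → EReal) (c : ℝ) (y q : E) : Prop :=
  ∀ z : E, proxObjective g c y q ≤ proxObjective g c y z

theorem IsProxPoint.ne_top {f : E → EReal} {γ : ℝ} {x p z : E} (hγ : 0 < γ)
    (hp : IsProxPoint f γ x p) (hz : f z ≠ ⊤) (hz' : f z ≠ ⊥) : f p ≠ ⊤ := by
  intro htop
  lift f z to ℝ using ⟨hz, hz'⟩ with r hr
  have := hp z
  rw [proxObjective, proxObjective, htop, ← hr, EReal.coe_mul_top_of_pos hγ, EReal.top_add_coe,
    top_le_iff] at this
  exact EReal.coe_ne_top _ (by exact_mod_cast this)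

variable [InnerProductSpace ℝ E]

theorem inner_le_of_forall_segment {x p z : E} {a : ℝ}
    (h : ∀ t : ℝ, 0 < t → t ≤ 1 →
      ‖x - p‖ ^ 2 / 2 ≤ t * a + ‖x - ((1 - t) • p + t • z)‖ ^ 2 / 2) :
    ⟪x - p, z - p⟫ ≤ a := by
  refine le_of_forall_sub_mul_le (B := ‖z - p‖ ^ 2 / 2) fun t ht ht1 => ?_
  have hexpand : ‖x - ((1 - t) • p + t • z)‖ ^ 2
      = ‖x - p‖ ^ 2 - 2 * (t * ⟪x - p, z - p⟫) + t ^ 2 * ‖z - p‖ ^ 2 := by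
    rw [show x - ((1 - t) • p + t • z) = (x - p) - t • (z - p) by module,
      norm_sub_sq_real, real_inner_smul_right, norm_smul, mul_pow, Real.norm_eq_abs, sq_abs]
  have := h t ht ht1
  rw [hexpand] at this
  have : t * (⟪x - p, z - p⟫ - t * (‖z - p‖ ^ 2 / 2)) ≤ t * a := by linarith
  exact le_of_mul_le_mul_left this ht

/-- Subgradients exist only where `f` is finite, as in `∂f(p) = ∅` for `f p = ⊤`. -/
def IsSubgradient (f : E → EReal) (p u : E) : Prop :=
  ∃ r : ℝ, f p = r ∧ ∀ z : E, ((r + ⟪u, z - p⟫ : ℝ) : EReal) ≤ f z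

theorem IsProxPoint.isSubgradient {f : E → EReal} {γ : ℝ} {x p : E} (hγ : 0 < γ)
    (hconvex : ∀ x y : E, ∀ a b : ℝ, 0 ≤ a → 0 ≤ b → a + b = 1 →
      f (a • x + b • y) ≤ (a : EReal) * f x + (b : EReal) * f y)
    (hbot : ∀ z, f z ≠ ⊥) (hp : IsProxPoint f γ x p) (hfp : f p ≠ ⊤) :
    IsSubgradient f p (γ⁻¹ • (x - p)) := by
  obtain ⟨r, hr⟩ : ∃ r : ℝ, f p = r := ⟨_, (EReal.coe_toReal hfp (hbot p)).symm⟩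
  refine ⟨r, hr, fun z => ?_⟩
  rcases eq_or_ne (f z) ⊤ with hz | hz
  · rw [hz]; exact le_top
  obtain ⟨s, hs⟩ : ∃ s : ℝ, f z = s := ⟨_, (EReal.coe_toReal hz (hbot z)).symm⟩
  rw [hs, EReal.coe_le_coe_iff, real_inner_smul_left, ← le_sub_iff_add_le',
    inv_mul_le_iff₀ hγ]
  refine inner_le_of_forall_segment fun t ht ht1 => ?_
  set pt := (1 - t) • p + t • z
  have hseg : f pt ≤ (((1 - t) * r + t * s : ℝ) : EReal) := by
    have := hconvex p z (1 - t) t (by linarith) ht.le (by ring)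
    rw [hr, hs] at this
    exact_mod_cast this
  obtain ⟨w, hw⟩ : ∃ w : ℝ, f pt = w :=
    ⟨_, (EReal.coe_toReal (ne_top_of_le_ne_top (EReal.coe_ne_top _) hseg) (hbot pt)).symm⟩
  have hmin := hp pt
  rw [proxObjective, proxObjective, hr, hw] at hmin
  rw [hw] at hseg
  have hseg' : w ≤ (1 - t) * r + t * s := by exact_mod_cast hseg
  have hmin' : γ * r + ‖x - p‖ ^ 2 / 2 ≤ γ * w + ‖x - pt‖ ^ 2 / 2 := by exact_mod_cast hmin
  linarith [mul_le_mul_of_nonneg_left hseg' hγ.le]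

noncomputable def fenchelConj (f : E → EReal) (u : E) : EReal :=
  ⨆ z : E, ((⟪z, u⟫ : ℝ) : EReal) - f z

theorem le_fenchelConj (f : E → EReal) (z u : E) :
    ((⟪z, u⟫ : ℝ) : EReal) - f z ≤ fenchelConj f u :=
  le_iSup (fun w => ((⟪w, u⟫ : ℝ) : EReal) - f w) z

theorem IsSubgradient.fenchelConj_eq {f : E → EReal} {p u : E} (h : IsSubgradient f p u) :
    fenchelConj f u = ((⟪p, u⟫ : ℝ) : EReal) - f p := by
  obtain ⟨r, hr, hsub⟩ := h
  refine le_antisymm (iSup_le fun z => ?_) (le_fenchelConj f p u)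
  have hz := hsub z
  rw [hr]
  generalize f z = w at hz ⊢
  induction w using EReal.rec with
  | bot => exact absurd hz (by simp)
  | top => simp
  | coe s =>
    have : r + ⟪u, z - p⟫ ≤ s := by exact_mod_cast hz
    rw [inner_sub_right, real_inner_comm p u, real_inner_comm z u] at this
    exact_mod_cast (by linarith : ⟪z, u⟫ - s ≤ ⟪p, u⟫ - r)

theorem IsSubgradient.isSubgradient_fenchelConj {f : E → EReal} {p u : E}
    (h : IsSubgradient f p u) : IsSubgradient (fenchelConj f) u p := by
  have hval := h.fenchelConj_eq
  obtain ⟨r, hr, -⟩ := h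
  refine ⟨⟪p, u⟫ - r, by rw [hval, hr]; rfl, fun z => ?_⟩
  calc (((⟪p, u⟫ - r) + ⟪p, z - u⟫ : ℝ) : EReal) = ((⟪p, z⟫ : ℝ) : EReal) - f p := by
        rw [hr, inner_sub_right]; norm_cast; ring_nf
    _ ≤ fenchelConj f z := le_fenchelConj f p z

theorem IsSubgradient.proxObjective_add_le {g : E → EReal} {c : ℝ} {y u v : E} (hc : 0 < c)
    (h : IsSubgradient g u v) (hy : y = u + c • v) (z : E) :
    proxObjective g c y u + ((‖z - u‖ ^ 2 / 2 : ℝ) : EReal) ≤ proxObjective g c y z := by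
  obtain ⟨r, hr, hsub⟩ := h
  have hz := hsub z
  rw [proxObjective, proxObjective, hr]
  generalize g z = w at hz ⊢
  induction w using EReal.rec with
  | bot => exact absurd hz (by simp)
  | top => rw [EReal.coe_mul_top_of_pos hc, EReal.top_add_coe]; exact le_top
  | coe s =>
    have hs : r + ⟪v, z - u⟫ ≤ s := by exact_mod_cast hz
    have hyu : y - u = c • v := by rw [hy]; abel
    have hyz : ‖y - z‖ ^ 2 = ‖y - u‖ ^ 2 - 2 * (c * ⟪v, z - u⟫) + ‖z - u‖ ^ 2 := by
      rw [show y - z = c • v - (z - u) by rw [hy]; abel, hyu, norm_sub_sq_real,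
        real_inner_smul_left]
    have hcs : c * (r + ⟪v, z - u⟫) ≤ c * s := mul_le_mul_of_nonneg_left hs hc.le
    have : c * r + ‖y - u‖ ^ 2 / 2 + ‖z - u‖ ^ 2 / 2 ≤ c * s + ‖y - z‖ ^ 2 / 2 := by
      rw [hyz]; linarith
    exact_mod_cast this

theorem IsSubgradient.eq_of_isProxPoint {g : E → EReal} {c : ℝ} {y u v q : E} (hc : 0 < c)
    (h : IsSubgradient g u v) (hy : y = u + c • v) (hq : IsProxPoint g c y q) : q = u := by
  have hle := (h.proxObjective_add_le hc hy q).trans (hq u)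
  obtain ⟨r, hr, -⟩ := h
  rw [proxObjective, hr] at hle
  have hle' : c * r + ‖y - u‖ ^ 2 / 2 + ‖q - u‖ ^ 2 / 2 ≤ c * r + ‖y - u‖ ^ 2 / 2 := by
    exact_mod_cast hle
  have hsq : ‖q - u‖ ^ 2 = 0 := le_antisymm (by linarith) (sq_nonneg _)
  exact sub_eq_zero.1 (norm_eq_zero.1 ((pow_eq_zero_iff two_ne_zero).1 hsq))

end Prox

theorem stmt_18_general {E : Type*} [NormedAddCommGroup E] [InnerProductSpace ℝ E]
    (f : E → EReal) (γ : ℝ) (hγ : 0 < γ)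
    (hproper : (∃ x, f x ≠ ⊤) ∧ ∀ x, f x ≠ ⊥)
    (hconvex : ∀ x y : E, ∀ a b : ℝ, 0 ≤ a → 0 ≤ b → a + b = 1 →
      f (a • x + b • y) ≤ (a : EReal) * f x + (b : EReal) * f y)
    (fstar : E → EReal)
    (hfstar : ∀ u, fstar u = ⨆ z : E, ((⟪z, u⟫ : ℝ) : EReal) - f z)
    (x p q : E)
    (hp : ∀ z : E, (γ : EReal) * f p + ((‖x - p‖ ^ 2 / 2 : ℝ) : EReal)
        ≤ (γ : EReal) * f z + ((‖x - z‖ ^ 2 / 2 : ℝ) : EReal))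
    (hq : ∀ z : E, ((1 / γ : ℝ) : EReal) * fstar q
          + ((‖(1 / γ) • x - q‖ ^ 2 / 2 : ℝ) : EReal)
        ≤ ((1 / γ : ℝ) : EReal) * fstar z
          + ((‖(1 / γ) • x - z‖ ^ 2 / 2 : ℝ) : EReal)) :
    p + γ • q = x := by
  obtain ⟨⟨x₀, hx₀⟩, hbot⟩ := hproper
  obtain rfl : fstar = fenchelConj f := funext hfstar
  have hfp : f p ≠ ⊤ := IsProxPoint.ne_top hγ hp hx₀ (hbot x₀)
  have hsub : IsSubgradient f p (γ⁻¹ • (x - p)) :=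
    IsProxPoint.isSubgradient hγ hconvex hbot hp hfp
  have hq₀ : q = γ⁻¹ • (x - p) :=
    hsub.isSubgradient_fenchelConj.eq_of_isProxPoint (one_div_pos.2 hγ)
      (by rw [one_div]; module) hq
  rw [hq₀, smul_smul, mul_inv_cancel₀ hγ.ne', one_smul, add_sub_cancel]

/-- Moreau's identity: `prox_{γf}(x) + γ prox_{f*/γ}(x/γ) = x`. -/
theorem stmt_18 {E : Type*} [NormedAddCommGroup E] [InnerProductSpace ℝ E]
    [FiniteDimensional ℝ E]
    (f : E → EReal) (γ : ℝ) (hγ : 0 < γ)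
    (hproper : (∃ x, f x ≠ ⊤) ∧ ∀ x, f x ≠ ⊥)
    (hconvex : ∀ x y : E, ∀ a b : ℝ, 0 ≤ a → 0 ≤ b → a + b = 1 →
      f (a • x + b • y) ≤ (a : EReal) * f x + (b : EReal) * f y)
    (hlsc : LowerSemicontinuous f)
    (fstar : E → EReal)
    (hfstar : ∀ u, fstar u = ⨆ z : E, ((⟪z, u⟫ : ℝ) : EReal) - f z)
    (x p q : E)
    (hp : ∀ z : E, (γ : EReal) * f p + ((‖x - p‖ ^ 2 / 2 : ℝ) : EReal)
        ≤ (γ : EReal) * f z + ((‖x - z‖ ^ 2 / 2 : ℝ) : EReal))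
    (hq : ∀ z : E, ((1 / γ : ℝ) : EReal) * fstar q
          + ((‖(1 / γ) • x - q‖ ^ 2 / 2 : ℝ) : EReal)
        ≤ ((1 / γ : ℝ) : EReal) * fstar z
          + ((‖(1 / γ) • x - z‖ ^ 2 / 2 : ℝ) : EReal)) :
    p + γ • q = x :=
  stmt_18_general f γ hγ hproper hconvex fstar hfstar x p q hp hq
end
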